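/- arXiv:1909.04811 — 2 statements merged into one kernel-verified Lean document; each statement's English description precedes it below -/
import Mathlib

section
/- Let B₁, …, B_J be independent Bernoulli random variables with P(Bᵢ = 1) ≥ 1/2 for each i. Then E[(J+1)/(1 + B₁ + ⋯ + B_J)] ≤ 2. -/
/-!
With `S = B₁ + ⋯ + B_J`, write `1 / (1 + S) = ∫₀¹ t ^ S dt` and exchange the integrals. By
independence `E[t ^ S] = ∏ᵢ E[t ^ Bᵢ] = ∏ᵢ (1 - (1 - t) pᵢ)`, and `pᵢ ≥ 1/2` bounds each factor
by `(1 + t) / 2`. Hence the expectation is at most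
`(J + 1) ∫₀¹ ((1 + t) / 2) ^ J dt = 2 - 2 ^ (-J)`.
-/

open MeasureTheory ProbabilityTheory

section

variable {Ω : Type*} [MeasurableSpace Ω] {μ : Measure Ω}

theorem integral_inv_add_one_eq_intervalIntegral_integral_pow [IsFiniteMeasure μ]
    {S : Ω → ℕ} (hS : Measurable S) :
    ∫ ω, ((S ω : ℝ) + 1)⁻¹ ∂μ = ∫ t in (0:ℝ)..1, ∫ ω, t ^ S ω ∂μ := by
  have h_pow : ∀ n : ℕ, ((n : ℝ) + 1)⁻¹ = ∫ t in (0:ℝ)..1, t ^ n := by simp [integral_pow]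
  simp_rw [h_pow, intervalIntegral.integral_of_le zero_le_one]
  refine integral_integral_swap (Integrable.of_bound
    (measurable_snd.pow (hS.comp measurable_fst)).aestronglyMeasurable 1 ?_)
  rw [Measure.ae_prod_iff_ae_ae (measurableSet_le (by fun_prop) measurable_const)]
  refine Filter.Eventually.of_forall fun ω ↦ ?_
  filter_upwards [ae_restrict_mem measurableSet_Ioc] with t ht
  rw [Function.uncurry_apply_pair, Real.norm_eq_abs, abs_pow]
  exact pow_le_one₀ (abs_nonneg t) (abs_le.2 ⟨by linarith [ht.1], ht.2⟩)

theorem integral_pow_of_le_one [IsProbabilityMeasure μ] {b : Ω → ℕ} (hb : Measurable b)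
    (hb_le : ∀ ω, b ω ≤ 1) (t : ℝ) :
    ∫ ω, t ^ b ω ∂μ = 1 - (1 - t) * μ.real {ω | b ω = 1} := by
  have h_set : MeasurableSet {ω | b ω = 1} := hb (measurableSet_singleton 1)
  have h_pow : ∀ ω, t ^ b ω = 1 - (1 - t) * Set.indicator {ω | b ω = 1} 1 ω := by
    intro ω
    rcases Nat.le_one_iff_eq_zero_or_eq_one.1 (hb_le ω) with h | h <;> simp [h]
  simp_rw [h_pow]
  rw [integral_sub (integrable_const 1) (((integrable_const 1).indicator h_set).const_mul _),
    integral_const_mul, integral_indicator_one h_set]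
  simp

theorem integral_pow_sum_eq_prod [IsProbabilityMeasure μ] {ι : Type*} [Fintype ι]
    {B : ι → Ω → ℕ} (hB : ∀ i, Measurable (B i)) (hB_le : ∀ i ω, B i ω ≤ 1)
    (h_indep : iIndepFun B μ) (t : ℝ) :
    ∫ ω, t ^ (∑ i, B i ω) ∂μ = ∏ i, (1 - (1 - t) * μ.real {ω | B i ω = 1}) := by
  simp_rw [← Finset.prod_pow_eq_pow_sum]
  rw [h_indep.integral_fun_prod_comp (fun i ↦ (hB i).aemeasurable)
    (fun _ ↦ (measurable_of_countable _).aestronglyMeasurable)]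
  exact Finset.prod_congr rfl fun i _ ↦ integral_pow_of_le_one (hB i) (hB_le i) t

end

theorem prod_one_sub_mul_le_pow {ι : Type*} [Fintype ι] {p : ι → ℝ}
    (hp : ∀ i, 1 / 2 ≤ p i ∧ p i ≤ 1) {t : ℝ} (ht : t ∈ Set.Icc 0 1) :
    ∏ i, (1 - (1 - t) * p i) ≤ ((1 + t) / 2) ^ Fintype.card ι := by
  calc ∏ i, (1 - (1 - t) * p i) ≤ ∏ _i : ι, (1 + t) / 2 :=
        Finset.prod_le_prod (fun i _ ↦ by nlinarith [hp i, ht.1, ht.2])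
          (fun i _ ↦ by nlinarith [hp i, ht.1, ht.2])
    _ = ((1 + t) / 2) ^ Fintype.card ι := by simp [div_pow]

theorem intervalIntegral_one_add_div_two_pow (n : ℕ) :
    ∫ t in (0:ℝ)..1, ((1 + t) / 2) ^ n = (2 - (1 / 2) ^ n) / (n + 1) := by
  have h := intervalIntegral.integral_comp_div_add (a := 0) (b := 1) (fun x : ℝ ↦ x ^ n)
    two_ne_zero (1 / 2)
  simp only [add_comm (1 : ℝ), add_div] at h ⊢
  rw [h, integral_pow, smul_eq_mul]
  norm_num [pow_succ]
  field_simp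

theorem barber_candes_lemma
    {Ω : Type*} [MeasurableSpace Ω] (μ : Measure Ω) [IsProbabilityMeasure μ]
    (J : ℕ) (B : Fin J → Ω → ℕ)
    (hmeas : ∀ i, Measurable (B i))
    (hval : ∀ i ω, B i ω ≤ 1)
    (hindep : iIndepFun B μ)
    (hhalf : ∀ i, (1:ℝ)/2 ≤ (μ {ω | B i ω = 1}).toReal) :
    ∫ ω, ((J:ℝ) + 1) / (1 + ∑ i, (B i ω : ℝ)) ∂μ ≤ 2 := by
  set p : Fin J → ℝ := fun i ↦ μ.real {ω | B i ω = 1}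
  calc ∫ ω, ((J:ℝ) + 1) / (1 + ∑ i, (B i ω : ℝ)) ∂μ
      = (J + 1) * ∫ ω, (((∑ i, B i ω : ℕ) : ℝ) + 1)⁻¹ ∂μ := by
        rw [← integral_const_mul]
        push_cast
        simp_rw [div_eq_mul_inv, add_comm (1:ℝ)]
    _ = (J + 1) * ∫ t in (0:ℝ)..1, ∏ i, (1 - (1 - t) * p i) := by
        rw [integral_inv_add_one_eq_intervalIntegral_integral_pow
          (Finset.measurable_sum _ fun i _ ↦ hmeas i)]
        simp_rw [integral_pow_sum_eq_prod hmeas hval hindep]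
        rfl
    _ ≤ (J + 1) * ∫ t in (0:ℝ)..1, ((1 + t) / 2) ^ J := by
        gcongr
        exact intervalIntegral.integral_mono_on zero_le_one
          (Continuous.intervalIntegrable (by fun_prop) _ _)
          (Continuous.intervalIntegrable (by fun_prop) _ _) fun t ht ↦ by
            simpa using prod_one_sub_mul_le_pow (p := p) (fun i ↦ ⟨hhalf i, measureReal_le_one⟩) ht
    _ = 2 - (1 / 2) ^ J := by
        rw [intervalIntegral_one_add_div_two_pow]
        field_simp
    _ ≤ 2 := sub_le_self _ (by positivity)
end

section
/- Let B₁, …, B_J be independent Bernoulli(1/2) random variables. Then E[(J+1)/(1 + B₁ + ⋯ + B_J)] = 2(1 - 2^{-(J+1)}) ≤ 2. -/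
/-! By independence the set of indices with `Bᵢ = 1` is uniformly distributed on the subsets of
the index set, so the expectation is `2⁻ᴶ ∑ₖ C(J,k) (J+1)/(k+1)`. Since
`C(J,k) (J+1)/(k+1) = C(J+1,k+1)`, the sum is `2ᴶ⁺¹ - 1`. -/

open MeasureTheory ProbabilityTheory Finset

theorem Nat.sum_range_choose_mul_div_one_add (n : ℕ) :
    ∑ k ∈ range (n + 1), (n.choose k : ℝ) * ((n + 1) / (1 + k)) = 2 ^ (n + 1) - 1 := by
  have hterm (k : ℕ) : (n.choose k : ℝ) * ((n + 1) / (1 + k)) = (n + 1).choose (k + 1) := by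
    rw [mul_div_assoc', div_eq_iff (by positivity), add_comm 1 (k : ℝ)]
    exact_mod_cast (mul_comm _ _).trans (Nat.add_one_mul_choose_eq n k)
  have hsum : ∑ k ∈ range (n + 2), ((n + 1).choose k : ℝ) = 2 ^ (n + 1) := by
    exact_mod_cast Nat.sum_range_choose (n + 1)
  rw [sum_range_succ', Nat.choose_zero_right] at hsum
  simp only [hterm]
  push_cast at hsum
  linarith

theorem Finset.sum_card_add_one_div_one_add_card (ι : Type*) [Fintype ι] :
    ∑ s : Finset ι, ((Fintype.card ι : ℝ) + 1) / (1 + #s) = 2 ^ (Fintype.card ι + 1) - 1 := by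
  rw [← powerset_univ, sum_powerset_apply_card (fun k ↦ ((Fintype.card ι : ℝ) + 1) / (1 + k)),
    card_univ]
  simpa only [nsmul_eq_mul] using Nat.sum_range_choose_mul_div_one_add _

theorem MeasureTheory.integral_comp_eq_sum_measureReal_preimage {Ω α E : Type*}
    [MeasurableSpace Ω] {μ : Measure Ω} [IsFiniteMeasure μ] [Fintype α] [MeasurableSpace α]
    [MeasurableSingletonClass α] [NormedAddCommGroup E] [NormedSpace ℝ E] [CompleteSpace E]
    {X : Ω → α} (hX : Measurable X) (f : α → E) :
    ∫ ω, f (X ω) ∂μ = ∑ a, μ.real (X ⁻¹' {a}) • f a := by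
  rw [← integral_map hX.aemeasurable .of_discrete, integral_fintype .of_finite]
  simp only [map_measureReal_apply hX (measurableSet_singleton _)]

section Bernoulli

variable {Ω ι : Type*} [Fintype ι] {B : ι → Ω → ℕ}

def successes (B : ι → Ω → ℕ) (ω : Ω) : Finset ι := {i | B i ω = 1}

theorem sum_eq_card_successes {ω : Ω} (hval : ∀ i, B i ω ≤ 1) :
    ∑ i, (B i ω : ℝ) = #(successes B ω) := by
  rw [successes, card_filter]
  push_cast
  refine sum_congr rfl fun i _ ↦ ?_
  rcases Nat.le_one_iff_eq_zero_or_eq_one.1 (hval i) with h | h <;> simp [h]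

theorem successes_preimage_singleton (s : Finset ι) :
    successes B ⁻¹' {s} = ⋂ i, {ω | B i ω = 1 ↔ i ∈ s} := by
  ext ω
  simp [successes, Finset.ext_iff, iff_comm]

variable [MeasurableSpace Ω] {μ : Measure Ω}

theorem measurable_successes (hmeas : ∀ i, Measurable (B i)) : Measurable (successes B) :=
  measurable_finset_iff.2 fun i ↦ by
    simpa [successes] using measurableSet_setOfPred.1 (hmeas i (measurableSet_singleton 1))

variable [IsProbabilityMeasure μ]

theorem measureReal_successes_preimage_singleton (hmeas : ∀ i, Measurable (B i))
    (hindep : iIndepFun B μ) (hhalf : ∀ i, μ.real {ω | B i ω = 1} = 1 / 2) (s : Finset ι) :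
    μ.real (successes B ⁻¹' {s}) = (1 / 2) ^ Fintype.card ι := by
  have hfactor (i : ι) : μ.real {ω | B i ω = 1 ↔ i ∈ s} = 1 / 2 := by
    by_cases hi : i ∈ s
    · simpa [hi] using hhalf i
    · have hc : {ω | B i ω = 1 ↔ i ∈ s} = {ω | B i ω = 1}ᶜ := by ext; simp [hi]
      have hone : MeasurableSet {ω | B i ω = 1} := hmeas i (measurableSet_singleton 1)
      rw [hc, probReal_compl_eq_one_sub hone, hhalf i]
      norm_num
  have hprod : μ.real (⋂ i, {ω | B i ω = 1 ↔ i ∈ s}) = ∏ i, μ.real {ω | B i ω = 1 ↔ i ∈ s} := by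
    simp only [measureReal_def, ← ENNReal.toReal_prod]
    exact congrArg ENNReal.toReal
      (hindep.meas_iInter fun i ↦ ⟨{n | n = 1 ↔ i ∈ s}, .of_discrete, rfl⟩)
  rw [successes_preimage_singleton, hprod, prod_congr rfl fun i _ ↦ hfactor i, prod_const,
    card_univ]

theorem integral_card_add_one_div_one_add_sum (hmeas : ∀ i, Measurable (B i))
    (hval : ∀ i ω, B i ω ≤ 1) (hindep : iIndepFun B μ)
    (hhalf : ∀ i, μ.real {ω | B i ω = 1} = 1 / 2) :
    ∫ ω, ((Fintype.card ι : ℝ) + 1) / (1 + ∑ i, (B i ω : ℝ)) ∂μ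
      = 2 - (1 / 2) ^ Fintype.card ι := by
  let f (s : Finset ι) : ℝ := ((Fintype.card ι : ℝ) + 1) / (1 + #s)
  calc ∫ ω, ((Fintype.card ι : ℝ) + 1) / (1 + ∑ i, (B i ω : ℝ)) ∂μ
      = ∫ ω, f (successes B ω) ∂μ := by
        simp only [f, sum_eq_card_successes (hval · _)]
    _ = ∑ s, (1 / 2) ^ Fintype.card ι * f s := by
        simp only [integral_comp_eq_sum_measureReal_preimage (measurable_successes hmeas),
          measureReal_successes_preimage_singleton hmeas hindep hhalf, smul_eq_mul]
    _ = 2 - (1 / 2) ^ Fintype.card ι := by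
        rw [← mul_sum, sum_card_add_one_div_one_add_card, pow_succ, mul_sub, ← mul_assoc,
          ← mul_pow]
        norm_num

end Bernoulli

theorem barber_candes_exact
    {Ω : Type*} [MeasurableSpace Ω] (μ : Measure Ω) [IsProbabilityMeasure μ]
    (J : ℕ) (B : Fin J → Ω → ℕ)
    (hmeas : ∀ i, Measurable (B i))
    (hval : ∀ i ω, B i ω ≤ 1)
    (hindep : iIndepFun B μ)
    (hhalf : ∀ i, (μ {ω | B i ω = 1}).toReal = 1/2) :
    (∫ ω, ((J:ℝ) + 1) / (1 + ∑ i, (B i ω : ℝ)) ∂μ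
        = 2 * (1 - (2:ℝ) ^ (-((J:ℝ) + 1)))) ∧
    ∫ ω, ((J:ℝ) + 1) / (1 + ∑ i, (B i ω : ℝ)) ∂μ ≤ 2 := by
  have hint := integral_card_add_one_div_one_add_sum hmeas hval hindep hhalf
  rw [Fintype.card_fin] at hint
  have hrpow : (2 : ℝ) ^ (-((J : ℝ) + 1)) = (1 / 2) ^ (J + 1) := by
    rw [Real.rpow_neg zero_le_two, ← Nat.cast_add_one, Real.rpow_natCast, one_div, inv_pow]
  rw [hint, hrpow, pow_succ]
  constructor
  · ring
  · have hpos : (0 : ℝ) ≤ (1 / 2) ^ J := by positivity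
    linarith
end
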